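/- Assume (1−δ)·σₓ < √(2π)·σ². Define G(x̄) = Φ((θ̄₀(x̄) − μ_p(x̄))/σ_p), where θ̄₀(x̄) is the unique root of θ − (1−δ)·Φ((x̄−θ)/σₓ) = 0, μ_p(x̄) = (σ²x̄ + σₓ²μ)/(σ² + σₓ²), and σ_p > 0 is a constant. Then G is strictly decreasing on ℝ. -/

import Mathlib

open Real Filter Set MeasureTheory

/-- Standard normal probability density function. -/
noncomputable def stdPdf (t : ℝ) : ℝ := (Real.sqrt (2 * Real.pi))⁻¹ * Real.exp (-(t ^ 2) / 2)

/-- Standard normal cumulative distribution function. -/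
noncomputable def stdCdf (x : ℝ) : ℝ := ∫ t in Set.Iic x, stdPdf t

lemma stdPdf_pos (t : ℝ) : 0 < stdPdf t :=
  mul_pos (inv_pos.2 (Real.sqrt_pos.2 (by positivity))) (Real.exp_pos _)

lemma stdPdf_le (t : ℝ) : stdPdf t ≤ (Real.sqrt (2 * Real.pi))⁻¹ := by
  have h1 : Real.exp (-(t ^ 2) / 2) ≤ 1 := by
    rw [Real.exp_le_one_iff]; nlinarith [sq_nonneg t]
  have h2 : (0:ℝ) ≤ (Real.sqrt (2 * Real.pi))⁻¹ := by positivity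
  calc stdPdf t ≤ (Real.sqrt (2 * Real.pi))⁻¹ * 1 := by
        exact mul_le_mul_of_nonneg_left h1 h2
    _ = _ := mul_one _

lemma stdPdf_integrable : Integrable stdPdf := by
  have h := (integrable_exp_neg_mul_sq (by norm_num : (0:ℝ) < 1/2)).const_mul
    (Real.sqrt (2 * Real.pi))⁻¹
  have he : stdPdf = fun t : ℝ => (Real.sqrt (2 * Real.pi))⁻¹ * Real.exp (-(1/2) * t ^ 2) := by
    funext t; unfold stdPdf; congr 1; ring_nf
  rw [he]; exact h

lemma stdCdf_sub {u v : ℝ} (h : u ≤ v) :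
    stdCdf v - stdCdf u = ∫ t in Set.Ioc u v, stdPdf t := by
  unfold stdCdf
  rw [intervalIntegral.integral_Iic_sub_Iic stdPdf_integrable.integrableOn
    stdPdf_integrable.integrableOn, intervalIntegral.integral_of_le h]

lemma stdCdf_strictMono : StrictMono stdCdf := by
  intro u v huv
  have h := stdCdf_sub huv.le
  have hpos : 0 < ∫ t in Set.Ioc u v, stdPdf t := by
    rw [MeasureTheory.setIntegral_pos_iff_support_of_nonneg_ae
      (Filter.Eventually.of_forall fun t => (stdPdf_pos t).le)
      stdPdf_integrable.integrableOn]
    have : Function.support stdPdf ∩ Set.Ioc u v = Set.Ioc u v := by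
      apply Set.inter_eq_self_of_subset_right
      intro t _; exact (stdPdf_pos t).ne'
    rw [this, Real.volume_Ioc]
    simp [huv, sub_pos.2 huv]
  linarith

lemma stdCdf_lip {u v : ℝ} (h : u ≤ v) :
    stdCdf v - stdCdf u ≤ (v - u) * (Real.sqrt (2 * Real.pi))⁻¹ := by
  rw [stdCdf_sub h]
  have : ∫ t in Set.Ioc u v, stdPdf t ≤ ∫ _t in Set.Ioc u v, (Real.sqrt (2 * Real.pi))⁻¹ :=
    MeasureTheory.setIntegral_mono_on stdPdf_integrable.integrableOn
      (MeasureTheory.integrableOn_const (by simp) enorm_ne_top)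
      measurableSet_Ioc (fun t _ => stdPdf_le t)
  calc (∫ t in Set.Ioc u v, stdPdf t)
      ≤ ∫ _t in Set.Ioc u v, (Real.sqrt (2 * Real.pi))⁻¹ := this
    _ = (v - u) * (Real.sqrt (2 * Real.pi))⁻¹ := by
        rw [MeasureTheory.setIntegral_const, Real.volume_real_Ioc_of_le h,
          smul_eq_mul]

/-- Under Assumption 1, G(x̄) = Φ((θ̄₀(x̄) − μ_p(x̄))/σ_p) is strictly decreasing. -/
theorem stmt7 (δ σ σx σp μ : ℝ) (hδ0 : 0 < δ) (hδ1 : δ < 1) (hσ : 0 < σ) (hσx : 0 < σx)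
    (hσp : 0 < σp)
    (hA : (1 - δ) * σx < Real.sqrt (2 * Real.pi) * σ ^ 2)
    (θ0 : ℝ → ℝ)
    (hroot : ∀ xbar : ℝ, θ0 xbar - (1 - δ) * stdCdf ((xbar - θ0 xbar) / σx) = 0) :
    StrictAnti (fun xbar : ℝ =>
      stdCdf ((θ0 xbar - (σ ^ 2 * xbar + σx ^ 2 * μ) / (σ ^ 2 + σx ^ 2)) / σp)) := by
  intro a b hab
  simp only
  apply stdCdf_strictMono
  apply div_lt_div_of_pos_right _ hσp
  have hs2 : (0:ℝ) < σ ^ 2 + σx ^ 2 := by positivity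
  have hμp : (σ ^ 2 * a + σx ^ 2 * μ) / (σ ^ 2 + σx ^ 2) + σ ^ 2 * (b - a) / (σ ^ 2 + σx ^ 2)
      = (σ ^ 2 * b + σx ^ 2 * μ) / (σ ^ 2 + σx ^ 2) := by field_simp; ring
  -- suffices: θ0 b - θ0 a < σ² (b - a) / (σ² + σx²)
  have key : θ0 b - θ0 a < σ ^ 2 * (b - a) / (σ ^ 2 + σx ^ 2) := by
    have hd : (0 : ℝ) < b - a := sub_pos.2 hab
    set Δ := θ0 b - θ0 a with hΔdef
    by_cases hΔ : Δ ≤ 0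
    · exact lt_of_le_of_lt hΔ (by positivity)
    push_neg at hΔ
    have h1δ : (0:ℝ) < 1 - δ := by linarith
    have hra := hroot a
    have hrb := hroot b
    have hΔeq : Δ = (1 - δ) * (stdCdf ((b - θ0 b) / σx) - stdCdf ((a - θ0 a) / σx)) := by
      rw [hΔdef]; linarith [hra, hrb, mul_sub (1-δ) (stdCdf ((b - θ0 b) / σx)) (stdCdf ((a - θ0 a) / σx))]
    have hΦ : stdCdf ((a - θ0 a) / σx) < stdCdf ((b - θ0 b) / σx) := by
      by_contra hc
      push_neg at hc
      nlinarith [hΔeq]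
    have hu : (a - θ0 a) / σx < (b - θ0 b) / σx := stdCdf_strictMono.lt_iff_lt.1 hΦ
    have hlip := stdCdf_lip hu.le
    have hdiff : (b - θ0 b) / σx - (a - θ0 a) / σx = (b - a - Δ) / σx := by
      rw [hΔdef]; field_simp; ring
    rw [hdiff] at hlip
    set s := Real.sqrt (2 * Real.pi) with hs
    have hspos : (0:ℝ) < s := Real.sqrt_pos.2 (by positivity)
    -- from hΔeq and hlip: Δ ≤ (1-δ) * (b-a-Δ)/σx * s⁻¹
    have h2 : Δ * σx * s ≤ (1 - δ) * (b - a - Δ) := by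
      have := mul_le_mul_of_nonneg_left hlip h1δ.le
      rw [← hΔeq] at this
      have h3 : Δ ≤ (1 - δ) * ((b - a - Δ) / σx) * s⁻¹ := by
        calc Δ ≤ (1 - δ) * ((b - a - Δ) / σx * s⁻¹) := this
          _ = (1 - δ) * ((b - a - Δ) / σx) * s⁻¹ := by ring
      have h4 := mul_le_mul_of_nonneg_right h3 hspos.le
      rw [mul_assoc, inv_mul_cancel₀ hspos.ne', mul_one] at h4
      have h5 := mul_le_mul_of_nonneg_right h4 hσx.le
      calc Δ * σx * s = Δ * s * σx := by ring
        _ ≤ (1 - δ) * ((b - a - Δ) / σx) * σx := h5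
        _ = (1 - δ) * (b - a - Δ) := by field_simp
    -- multiply hA: (1-δ)σx < s σ² by Δ, combine
    rw [lt_div_iff₀ hs2]
    nlinarith [mul_pos hΔ hσx, mul_le_mul_of_nonneg_left h2 (sq_nonneg σ),
      mul_lt_mul_of_pos_right hA (mul_pos hΔ hσx), h1δ, hd]
  calc θ0 b - (σ ^ 2 * b + σx ^ 2 * μ) / (σ ^ 2 + σx ^ 2)
      = θ0 b - ((σ ^ 2 * a + σx ^ 2 * μ) / (σ ^ 2 + σx ^ 2)
        + σ ^ 2 * (b - a) / (σ ^ 2 + σx ^ 2)) := by rw [hμp]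
    _ < θ0 a - (σ ^ 2 * a + σx ^ 2 * μ) / (σ ^ 2 + σx ^ 2) := by linarith
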